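/- arXiv:1801.07289 — 2 statements merged into one kernel-verified Lean document; each statement's English description precedes it below -/
import Mathlib

section
/- For a nonzero covector ξ on a 3-dimensional Riemannian manifold, the kernel of the principal symbol σ_ξ of the Codazzi operator D(η)_{ijk} = D_i η_{jk} − D_j η_{ik} acting on symmetric 2-tensors consists exactly of tensors of the form c ξ_i ξ_j for a scalar c; in particular the symbol is injective on tracefree symmetric 2-tensors, so the restriction of the Codazzi operator to tracefree symmetric 2-tensors is overdetermined elliptic. -/
open scoped BigOperators

noncomputable section

lemma codazzi_aux (ξ : Fin 3 → ℝ) (hξ : ξ ≠ 0)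
    (η : Fin 3 → Fin 3 → ℝ) (hsym : ∀ i j, η i j = η j i)
    (h : ∀ i j k, ξ i * η j k - ξ j * η i k = 0) :
    ∃ c : ℝ, ∀ i j, η i j = c * ξ i * ξ j := by
  obtain ⟨m, hm⟩ : ∃ m, ξ m ≠ 0 := by
    by_contra hc
    push_neg at hc
    exact hξ (funext fun i => hc i)
  refine ⟨η m m / (ξ m * ξ m), fun i j => ?_⟩
  have h1 : ξ m * η i j = ξ i * η m j := by have := h m i j; linarith
  have h2 : ξ m * η m j = ξ j * η m m := by
    have h3 := h m j m; rw [hsym j m] at h3; linarith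
  field_simp
  linear_combination ξ m * h1 + ξ i * h2

/-- **Kernel of the symbol of the Codazzi operator.**  Pointwise, in an orthonormal
frame of a 3-dimensional inner product space, given a nonzero covector `ξ`, a symmetric
`2`-tensor `η` lies in the kernel of the symbol
`σ_ξ(η)_{ijk} = ξ_i η_{jk} - ξ_j η_{ik}` iff `η_{ij} = c ξ_i ξ_j` for some scalar `c`;
in particular the symbol is injective on tracefree symmetric `2`-tensors, so the
Codazzi operator restricted to tracefree symmetric `2`-tensors is overdetermined
elliptic. -/
theorem codazzi_symbol_kernel (ξ : Fin 3 → ℝ) (hξ : ξ ≠ 0) :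
    (∀ η : Fin 3 → Fin 3 → ℝ, (∀ i j, η i j = η j i) →
      ((∀ i j k, ξ i * η j k - ξ j * η i k = 0) ↔
        ∃ c : ℝ, ∀ i j, η i j = c * ξ i * ξ j)) ∧
    (∀ η : Fin 3 → Fin 3 → ℝ, (∀ i j, η i j = η j i) → (∑ i, η i i) = 0 →
      (∀ i j k, ξ i * η j k - ξ j * η i k = 0) → η = 0) := by
  constructor
  · intro η hsym
    constructor
    · exact codazzi_aux ξ hξ η hsym
    · rintro ⟨c, hc⟩ i j k
      rw [hc, hc]; ring
  · intro η hsym htr h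
    obtain ⟨c, hc⟩ := codazzi_aux ξ hξ η hsym h
    have hsum : (∑ i, η i i) = c * ∑ i, ξ i * ξ i := by
      rw [Finset.mul_sum]
      exact Finset.sum_congr rfl fun i _ => by rw [hc]; ring
    have hpos : (0:ℝ) < ∑ i, ξ i * ξ i := by
      obtain ⟨m, hm⟩ : ∃ m, ξ m ≠ 0 := by
        by_contra hC; push_neg at hC; exact hξ (funext fun i => hC i)
      have hmm : (0:ℝ) < ξ m * ξ m := mul_self_pos.mpr hm
      calc (0:ℝ) < ξ m * ξ m := hmm
        _ ≤ ∑ i, ξ i * ξ i :=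
          Finset.single_le_sum (fun i _ => mul_self_nonneg (ξ i)) (Finset.mem_univ m)
    have hc0 : c = 0 := by
      rw [htr] at hsum
      rcases mul_eq_zero.mp hsum.symm with h0 | h0
      · exact h0
      · exact absurd h0 (ne_of_gt hpos)
    funext i j
    simp [hc, hc0]
end
end

section
/- Fix a nonzero covector ξ on a 3-dimensional inner product space. Suppose a Jacobi tensor J_{ijk} (antisymmetric in i,j with vanishing cyclic sum) satisfies the symbol equations ξ^k J_{ikj} + ξ^k J_{jki} − (2/3) ξ^k J_{lk}{}^l h_{ij} = 0 and ξ_i J_{jkl} + ξ_j J_{kil} + ξ_k J_{ijl} = 0. Then J_{ijk} = 0. Consequently the first-order operator K_h(J) = (D̊*(J), ε^{ijk} D_i J_{jkl}) on Jacobi tensors is elliptic. -/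
open scoped BigOperators

noncomputable section

/-- Levi-Civita symbol on `Fin 3` (components of the volume form in an orthonormal frame). -/
def eps : Fin 3 → Fin 3 → Fin 3 → ℝ :=
  ![![![0,0,0], ![0,0,1], ![0,-1,0]],
    ![![0,0,-1], ![0,0,0], ![1,0,0]],
    ![![0,1,0], ![-1,0,0], ![0,0,0]]]

/-- Components of the metric `h` in an orthonormal frame. -/
def gm (i j : Fin 3) : ℝ := if i = j then 1 else 0

/-- **Injectivity of the symbol of the operator `K_h`.**  Pointwise, on a 3-dimensional
inner product space with nonzero covector `ξ`, a Jacobi tensor `J` (antisymmetric in its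
first two indices, vanishing cyclic sum) satisfying the symbol equations
`ξ^k J_{ikj} + ξ^k J_{jki} - (2/3) ξ^k J_{lk}{}^l h_{ij} = 0` and
`ξ_i J_{jkl} + ξ_j J_{kil} + ξ_k J_{ijl} = 0` must vanish; consequently the first-order
operator `K_h(J) = (D̊*(J), ε^{ijk} D_i J_{jkl})` on Jacobi tensors is elliptic. -/
theorem symbol_of_K_operator_injective
    (ξ : Fin 3 → ℝ) (hξ : ξ ≠ 0)
    (J : Fin 3 → Fin 3 → Fin 3 → ℝ)
    (hanti : ∀ i j k, J i j k = - J j i k)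
    (hcyc : ∀ i j k, J i j k + J j k i + J k i j = 0)
    (hsym1 : ∀ i j, (∑ k, ξ k * J i k j) + (∑ k, ξ k * J j k i)
        - (2/3) * (∑ k, ξ k * ∑ l, J l k l) * gm i j = 0)
    (hsym2 : ∀ i j k l, ξ i * J j k l + ξ j * J k i l + ξ k * J i j l = 0) :
    J = 0 := by
  obtain ⟨m, hm⟩ := Function.ne_iff.mp hξ
  simp only [Fin.sum_univ_three] at hsym1
  obtain ⟨b, hb⟩ : ∃ b : Fin 3 → Fin 3 → ℝ,
      ∀ k l, b k l = ξ 0 * J 0 k l + ξ 1 * J 1 k l + ξ 2 * J 2 k l :=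
    ⟨_, fun _ _ => rfl⟩
  obtain ⟨N, hNdef⟩ : ∃ N : ℝ, N = ξ 0 * ξ 0 + ξ 1 * ξ 1 + ξ 2 * ξ 2 := ⟨_, rfl⟩
  have hmm : ξ m ≠ 0 := by simpa using hm
  have hN : N ≠ 0 := by
    intro h
    rw [hNdef] at h
    have h0 : ξ 0 = 0 := by nlinarith [mul_self_nonneg (ξ 0), mul_self_nonneg (ξ 1), mul_self_nonneg (ξ 2)]
    have h1 : ξ 1 = 0 := by nlinarith [mul_self_nonneg (ξ 0), mul_self_nonneg (ξ 1), mul_self_nonneg (ξ 2)]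
    have h2 : ξ 2 = 0 := by nlinarith [mul_self_nonneg (ξ 0), mul_self_nonneg (ξ 1), mul_self_nonneg (ξ 2)]
    apply hmm
    fin_cases m
    · exact h0
    · exact h1
    · exact h2
  -- β_l = ∑_k ξ_k b_{kl} = 0
  have hbeta : ∀ l, ξ 0 * b 0 l + ξ 1 * b 1 l + ξ 2 * b 2 l = 0 := by
    intro l
    linear_combination ξ 0 * hb 0 l + ξ 1 * hb 1 l + ξ 2 * hb 2 l
      + ξ 0 * ξ 1 * hanti 0 1 l + ξ 0 * ξ 2 * hanti 0 2 l + ξ 1 * ξ 2 * hanti 1 2 l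
      + (ξ 0 * ξ 0 / 2) * hanti 0 0 l + (ξ 1 * ξ 1 / 2) * hanti 1 1 l
      + (ξ 2 * ξ 2 / 2) * hanti 2 2 l
  -- key: N J_{jkl} = ξ_j b_{kl} - ξ_k b_{jl}
  have key : ∀ j k l, N * J j k l = ξ j * b k l - ξ k * b j l := by
    intro j k l
    linear_combination J j k l * hNdef
      + ξ 0 * hsym2 0 j k l + ξ 1 * hsym2 1 j k l + ξ 2 * hsym2 2 j k l
      - ξ j * ξ 0 * hanti k 0 l - ξ j * ξ 1 * hanti k 1 l - ξ j * ξ 2 * hanti k 2 l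
      - ξ j * hb k l + ξ k * hb j l
  -- symmetrized part of b
  have hs : ∀ i j, b i j + b j i
      = 2/3 * (b 0 0 + b 1 1 + b 2 2) * gm i j := by
    intro i j
    have hNmul : N * (b i j + b j i)
        = N * (2/3 * (b 0 0 + b 1 1 + b 2 2) * gm i j) := by
      linear_combination (-N) * hsym1 i j
        + ξ 0 * key i 0 j + ξ 1 * key i 1 j + ξ 2 * key i 2 j
        + ξ 0 * key j 0 i + ξ 1 * key j 1 i + ξ 2 * key j 2 i
        + ξ i * hbeta j + ξ j * hbeta i
        - (2/3) * gm i j * (ξ 0 * (key 0 0 0 + key 1 0 1 + key 2 0 2)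
            + ξ 1 * (key 0 1 0 + key 1 1 1 + key 2 1 2)
            + ξ 2 * (key 0 2 0 + key 1 2 1 + key 2 2 2))
        - (2/3) * gm i j * (ξ 0 * hbeta 0 + ξ 1 * hbeta 1 + ξ 2 * hbeta 2)
        + (b i j + b j i - 2/3 * (b 0 0 + b 1 1 + b 2 2) * gm i j) * hNdef
    exact mul_left_cancel₀ hN hNmul
  -- cyclic identity for b
  have hcycb : ∀ j k l, ξ j * b k l - ξ k * b j l + ξ k * b l j - ξ l * b k j
      + ξ l * b j k - ξ j * b l k = 0 := by
    intro j k l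
    linear_combination N * hcyc j k l - key j k l - key k l j - key l j k
  -- γ_k = ∑_l ξ_l b_{kl} = (2/3) t ξ_k
  have hgm : ∀ k, ξ 0 * gm k 0 + ξ 1 * gm k 1 + ξ 2 * gm k 2 = ξ k := by
    intro k; fin_cases k <;> simp [gm]
  have hgam : ∀ k, ξ 0 * b k 0 + ξ 1 * b k 1 + ξ 2 * b k 2
      = 2/3 * (b 0 0 + b 1 1 + b 2 2) * ξ k := by
    intro k
    linear_combination ξ 0 * hs k 0 + ξ 1 * hs k 1 + ξ 2 * hs k 2
      - hbeta k + (2/3) * (b 0 0 + b 1 1 + b 2 2) * hgm k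
  -- b is symmetric
  have hsymb : ∀ k l, b k l = b l k := by
    intro k l
    have hNmul : N * b k l = N * b l k := by
      linear_combination ξ 0 * hcycb 0 k l + ξ 1 * hcycb 1 k l + ξ 2 * hcycb 2 k l
        - ξ k * hgam l + ξ l * hgam k + ξ k * hbeta l - ξ l * hbeta k
        + (b k l - b l k) * hNdef
    exact mul_left_cancel₀ hN hNmul
  -- b is pure trace
  have hbval : ∀ i j, b i j = 1/3 * (b 0 0 + b 1 1 + b 2 2) * gm i j := by
    intro i j
    linear_combination (1/2) * hs i j + (1/2) * hsymb i j
  -- trace vanishes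
  have hgm' : ∀ l, ξ 0 * gm 0 l + ξ 1 * gm 1 l + ξ 2 * gm 2 l = ξ l := by
    intro l; fin_cases l <;> simp [gm]
  have ht : b 0 0 + b 1 1 + b 2 2 = 0 := by
    have h1 : (1/3 * (b 0 0 + b 1 1 + b 2 2)) * ξ m = 0 * ξ m := by
      linear_combination hbeta m - ξ 0 * hbval 0 m - ξ 1 * hbval 1 m - ξ 2 * hbval 2 m
        - (1/3) * (b 0 0 + b 1 1 + b 2 2) * hgm' m
    have h2 := mul_right_cancel₀ hmm h1
    linarith
  have hb0 : ∀ i j, b i j = 0 := by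
    intro i j; rw [hbval i j, ht]; ring
  funext i j k
  have h := key i j k
  rw [hb0, hb0] at h
  have : J i j k = 0 := by
    have := mul_eq_zero.mp (by linarith : N * J i j k = 0)
    tauto
  simpa using this
end
end
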